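/- Let φ be a topologically exact continuous map on a compact metric space X. Then for all x₀, y₀ ∈ X there exist backward orbits (x₋ᵢ) of x₀ and (y₋ᵢ) of y₀ such that liminf_{i→∞} d(x₋ᵢ, y₋ᵢ) = 0. -/

import Mathlib

/-!
An exact map of a compact space is surjective, so for every ball some iterate `φ^[m]`, `m > 0`,
maps it onto `X`: any two points have `m`-th preimages in the same small ball. Starting from
`(x₀, y₀)` we keep pulling the current pair back along such stretches to pairs at distance
`< 1/(N+1)`, `N` the time pulled back so far; the successive stretches glue into one backward
orbit of the pair, which comes arbitrarily close to the diagonal infinitely often.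
-/

open Set Metric Filter Topology Function

section BackwardOrbit

variable {α : Type*} (f : α → α)

theorem iterate_sub_apply_eq_of_chain {n : ℕ → ℕ} (hn : Monotone n) {a : ℕ → α}
    (ha : ∀ k, f^[n (k + 1) - n k] (a (k + 1)) = a k) {k l : ℕ} (hkl : k ≤ l) :
    f^[n l - n k] (a l) = a k := by
  induction l, hkl using Nat.le_induction with
  | base => simp
  | succ l hkl ih =>
    have hkl' := hn hkl
    have hl := hn (Nat.le_add_right l 1)
    rw [show n (l + 1) - n k = (n l - n k) + (n (l + 1) - n l) by omega, iterate_add_apply,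
      ha, ih]

theorem exists_backward_orbit_of_chain {n : ℕ → ℕ} (hn : StrictMono n) {a : ℕ → α}
    (ha : ∀ k, f^[n (k + 1) - n k] (a (k + 1)) = a k) :
    ∃ z : ℕ → α, (∀ i, f (z (i + 1)) = z i) ∧ ∀ k, z (n k) = a k := by
  refine ⟨fun i => f^[n i - i] (a i), fun i => ?_, fun k =>
    iterate_sub_apply_eq_of_chain f hn.monotone ha (hn.id_le k)⟩
  have hi : i ≤ n i := hn.id_le i
  have hlt := hn (Nat.lt_add_one i)
  rw [← iterate_succ_apply' f,
    show (n (i + 1) - (i + 1)).succ = (n i - i) + (n (i + 1) - n i) by omega,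
    iterate_add_apply, ha]

theorem exists_backward_orbit_frequently_lt (g : α → ℝ)
    (hg : ∀ p ε, 0 < ε → ∃ m, 0 < m ∧ ∃ q, f^[m] q = p ∧ g q < ε) (p₀ : α) :
    ∃ z : ℕ → α, z 0 = p₀ ∧ (∀ i, f (z (i + 1)) = z i) ∧
      ∀ ε, 0 < ε → ∃ᶠ i in atTop, g (z i) < ε := by
  -- a state `(N, p)` records a point `p` reached after `N` steps backwards in total
  have step : ∀ s : ℕ × α, ∃ t : ℕ × α,
      s.1 < t.1 ∧ f^[t.1 - s.1] t.2 = s.2 ∧ g t.2 < 1 / (s.1 + 1) := by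
    rintro ⟨N, p⟩
    obtain ⟨m, hm, q, hq, hgq⟩ := hg p _ Nat.one_div_pos_of_nat
    exact ⟨(N + m, q), by simpa, by simpa, hgq⟩
  choose F hF_lt hF_iter hF_g using step
  set s : ℕ → ℕ × α := fun k => F^[k] (0, p₀)
  have hs : ∀ k, s (k + 1) = F (s k) := fun k => iterate_succ_apply' F k _
  have hn : StrictMono fun k => (s k).1 :=
    strictMono_nat_of_lt_succ fun k => hs k ▸ hF_lt _
  obtain ⟨z, hz, hzs⟩ := exists_backward_orbit_of_chain f hn (a := fun k => (s k).2)
    fun k => hs k ▸ hF_iter _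
  refine ⟨z, hzs 0, hz, fun ε hε => ?_⟩
  have hsmall : ∀ᶠ k in atTop, g (z (s (k + 1)).1) < ε := by
    filter_upwards [(tendsto_one_div_add_atTop_nhds_zero_nat.comp hn.tendsto_atTop).eventually
      (gt_mem_nhds hε)] with k hk
    rw [hzs, hs]
    exact (hF_g _).trans hk
  exact (hn.tendsto_atTop.comp (tendsto_add_atTop_nat 1)).frequently hsmall.frequently

end BackwardOrbit

theorem liminf_eq_zero_of_frequently_lt {ι : Type*} {l : Filter ι} {u : ι → ℝ}
    (hu : ∀ i, 0 ≤ u i) (h : ∀ ε, 0 < ε → ∃ᶠ i in l, u i < ε) : liminf u l = 0 := by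
  have hcobdd : IsCoboundedUnder (· ≥ ·) l u :=
    IsCoboundedUnder.of_frequently_le ((h 1 one_pos).mono fun _ => le_of_lt)
  refine le_antisymm (le_of_forall_pos_le_add fun ε hε => ?_)
    (le_liminf_of_le hcobdd (Eventually.of_forall hu))
  rw [zero_add]
  exact liminf_le_of_frequently_le ((h ε hε).mono fun _ => le_of_lt) (isBoundedUnder_of ⟨0, hu⟩)

def IsTopologicallyExact {X : Type*} [TopologicalSpace X] (φ : X → X) : Prop :=
  ∀ W : Set X, IsOpen W → W.Nonempty → ∃ j : ℕ, φ^[j] '' W = univ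

namespace IsTopologicallyExact

variable {X : Type*} {φ : X → X}

theorem surjective [TopologicalSpace X] [CompactSpace X] [T2Space X]
    (h : IsTopologicallyExact φ) (hc : Continuous φ) : Surjective φ := by
  by_contra hφ
  obtain ⟨w, hw⟩ : (range φ)ᶜ.Nonempty := nonempty_compl.2 (mt range_eq_univ.1 hφ)
  obtain ⟨j, hj⟩ := h _ (isCompact_range hc).isClosed.isOpen_compl ⟨w, hw⟩
  cases j with
  | zero =>
    have : φ w ∈ φ^[0] '' (range φ)ᶜ := hj ▸ mem_univ _
    simp at this
  | succ k =>
    obtain ⟨v, -, hv⟩ : w ∈ φ^[k + 1] '' (range φ)ᶜ := hj ▸ mem_univ w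
    exact hw ⟨φ^[k] v, by rwa [← iterate_succ_apply' φ]⟩

theorem exists_iterate_prodMap_preimage_dist_lt [PseudoMetricSpace X]
    (h : IsTopologicallyExact φ) (hφ : Surjective φ) (p : X × X) {ε : ℝ} (hε : 0 < ε) :
    ∃ m, 0 < m ∧ ∃ q : X × X, (Prod.map φ φ)^[m] q = p ∧ dist q.1 q.2 < ε := by
  obtain ⟨j, hj⟩ := h (ball p.1 (ε / 2)) isOpen_ball (nonempty_ball.2 (half_pos hε))
  have hball : φ^[j + 1] '' ball p.1 (ε / 2) = univ := by
    rw [iterate_succ', image_comp, hj, image_univ, hφ.range_eq]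
  obtain ⟨a, ha, hap⟩ : p.1 ∈ φ^[j + 1] '' ball p.1 (ε / 2) := hball ▸ mem_univ _
  obtain ⟨b, hb, hbp⟩ : p.2 ∈ φ^[j + 1] '' ball p.1 (ε / 2) := hball ▸ mem_univ _
  refine ⟨j + 1, j.succ_pos, (a, b), by rw [Prod.map_iterate, Prod.map_apply, hap, hbp], ?_⟩
  rw [mem_ball] at ha hb
  linarith [dist_triangle_right a b p.1]

end IsTopologicallyExact

theorem stmt9_general {X : Type*} [MetricSpace X] [CompactSpace X]
    (φ : X → X) (hc : Continuous φ)
    (hexact : ∀ W : Set X, IsOpen W → W.Nonempty → ∃ j : ℕ, φ^[j] '' W = univ)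
    (x₀ y₀ : X) :
    ∃ x y : ℕ → X, x 0 = x₀ ∧ y 0 = y₀ ∧
      (∀ i : ℕ, φ (x (i + 1)) = x i) ∧ (∀ i : ℕ, φ (y (i + 1)) = y i) ∧
      Filter.liminf (fun i : ℕ => dist (x i) (y i)) Filter.atTop = 0 := by
  have hexact' : IsTopologicallyExact φ := hexact
  obtain ⟨z, hz0, hz, hclose⟩ :=
    exists_backward_orbit_frequently_lt (Prod.map φ φ) (fun p => dist p.1 p.2)
      (fun p _ hε => hexact'.exists_iterate_prodMap_preimage_dist_lt
        (hexact'.surjective hc) p hε) (x₀, y₀)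
  exact ⟨fun i => (z i).1, fun i => (z i).2, congrArg Prod.fst hz0, congrArg Prod.snd hz0,
    fun i => congrArg Prod.fst (hz i), fun i => congrArg Prod.snd (hz i),
    liminf_eq_zero_of_frequently_lt (fun _ => dist_nonneg) hclose⟩

/-- for a topologically exact continuous map on a compact metric space and
any two points, there are backward orbits of the two points with liminf of the
distances equal to zero. -/
theorem stmt9 {X : Type*} [MetricSpace X] [CompactSpace X] [Nonempty X]
    (φ : X → X) (hc : Continuous φ)
    (hexact : ∀ W : Set X, IsOpen W → W.Nonempty → ∃ j : ℕ, φ^[j] '' W = univ)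
    (x₀ y₀ : X) :
    ∃ x y : ℕ → X, x 0 = x₀ ∧ y 0 = y₀ ∧
      (∀ i : ℕ, φ (x (i + 1)) = x i) ∧ (∀ i : ℕ, φ (y (i + 1)) = y i) ∧
      Filter.liminf (fun i : ℕ => dist (x i) (y i)) Filter.atTop = 0 :=
  stmt9_general φ hc hexact x₀ y₀
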